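/- arXiv:2602.03071 — 4 statements merged into one kernel-verified Lean document; each statement's English description precedes it below -/
import Mathlib

section
/- For 0 < λ < 1 and w > 0, the optimal objective value J(s*,e*) = √(2π)·w·erf(√(-ln λ)) - 2λw√(-2 ln λ) is strictly positive. -/
noncomputable def erf (z : ℝ) : ℝ := (2 / Real.sqrt Real.pi) * ∫ t in (0:ℝ)..z, Real.exp (-t^2)

open Real

/-- The integrand is strictly decreasing on `[0, a]`, so the integral beats the rectangle of
height `exp (-a ^ 2)`. -/
lemma mul_exp_neg_sq_lt_integral {a : ℝ} (ha : 0 < a) :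
    a * exp (-a ^ 2) < ∫ t in (0 : ℝ)..a, exp (-t ^ 2) := by
  have hlt := intervalIntegral.integral_lt_integral_of_continuousOn_of_le_of_exists_lt
    (f := fun _ => exp (-a ^ 2)) (g := fun t => exp (-t ^ 2)) ha continuousOn_const
    (by fun_prop)
    (fun x hx => exp_le_exp.2 <| neg_le_neg <| pow_le_pow_left₀ hx.1.le hx.2 2)
    ⟨0, ⟨le_rfl, ha.le⟩, exp_lt_exp.2 <| by simpa using pow_pos ha 2⟩
  simpa using hlt

lemma two_mul_mul_exp_neg_sq_lt_sqrt_pi_mul_erf {a : ℝ} (ha : 0 < a) :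
    2 * a * exp (-a ^ 2) < sqrt π * erf a := by
  have hpi : sqrt π ≠ 0 := (sqrt_pos.2 pi_pos).ne'
  have herf : sqrt π * erf a = 2 * ∫ t in (0 : ℝ)..a, exp (-t ^ 2) := by
    rw [erf]
    field_simp
  rw [herf, mul_assoc]
  linarith [mul_exp_neg_sq_lt_integral ha]

theorem optimal_objective_positive (w lam : ℝ) (hw : 0 < w) (hlam0 : 0 < lam) (hlam1 : lam < 1) :
    0 < Real.sqrt (2 * Real.pi) * w * erf (Real.sqrt (-Real.log lam)) -
        2 * lam * w * Real.sqrt (-2 * Real.log lam) := by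
  have hlog : 0 < -log lam := neg_pos.2 (log_neg hlam0 hlam1)
  set a := sqrt (-log lam) with ha_def
  have ha : 0 < a := sqrt_pos.2 hlog
  have hlam : lam = exp (-a ^ 2) := by
    rw [sq_sqrt hlog.le, neg_neg, exp_log hlam0]
  have hsqrt_log : sqrt (-2 * log lam) = sqrt 2 * a := by
    rw [ha_def, ← sqrt_mul zero_le_two]
    ring_nf
  have hfactor : sqrt (2 * π) * w * erf a - 2 * lam * w * sqrt (-2 * log lam)
      = sqrt 2 * w * (sqrt π * erf a - 2 * a * exp (-a ^ 2)) := by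
    rw [sqrt_mul zero_le_two, hsqrt_log, ← hlam]
    ring
  rw [hfactor]
  exact mul_pos (by positivity) (sub_pos.2 (two_mul_mul_exp_neg_sq_lt_sqrt_pi_mul_erf ha))
end

section
/- For 0 < λ < 1, the interval [c - w√(-2 ln λ), c + w√(-2 ln λ)] is the unique maximizer of J(s,e) = ∫ₛᵉ (f(t) - λ) dt over all pairs s ≤ e, where f(t) = exp(-(t-c)²/(2w²)): for any other pair (s,e) with s ≤ e, J(s,e) < J(s*,e*). -/
/-! The primitive `G x = ∫ t in s*..x, (f t - λ)` decreases on `(-∞, s*]`, increases on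
`[s*, e*]` and decreases on `[e*, ∞)`, since `f - λ` changes sign exactly at `s*` and `e*`.
As `J s e = G e - G s`, it remains an order argument: if `[s, e]` misses `(s*, e*)` the increment
is `≤ 0 < J s* e*`; otherwise `G e ≤ G e*` and `G s* ≤ G s`, and one of them is strict unless
`(s, e) = (s*, e*)`. -/

open Real Set MeasureTheory intervalIntegral

section PeakOrder

variable {α : Type*} [LinearOrder α] {G : α → ℝ} {a b : α}

lemma lt_of_strictMonoOn_Icc_of_strictAntiOn_Ici (hab : a ≤ b)
    (hmono : StrictMonoOn G (Icc a b)) (hanti : StrictAntiOn G (Ici b))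
    {x : α} (hx : a ≤ x) (hxb : x ≠ b) : G x < G b := by
  rcases hxb.lt_or_gt with hlt | hgt
  · exact hmono ⟨hx, hlt.le⟩ ⟨hab, le_rfl⟩ hlt
  · exact hanti self_mem_Ici hgt.le hgt

lemma lt_of_strictAntiOn_Iic_of_strictMonoOn_Icc (hab : a ≤ b)
    (hanti : StrictAntiOn G (Iic a)) (hmono : StrictMonoOn G (Icc a b))
    {x : α} (hx : x ≤ b) (hxa : x ≠ a) : G a < G x := by
  rcases hxa.lt_or_gt with hlt | hgt
  · exact hanti hlt.le self_mem_Iic hlt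
  · exact hmono ⟨le_rfl, hab⟩ ⟨hgt.le, hx⟩ hgt

lemma sub_lt_sub_of_strictAntiOn_of_strictMonoOn_of_strictAntiOn (hab : a < b)
    (hleft : StrictAntiOn G (Iic a)) (hmid : StrictMonoOn G (Icc a b))
    (hright : StrictAntiOn G (Ici b)) {s e : α} (hse : s ≤ e) (hne : (s, e) ≠ (a, b)) :
    G e - G s < G b - G a := by
  have hGab : G a < G b := hmid ⟨le_rfl, hab.le⟩ ⟨hab.le, le_rfl⟩ hab
  by_cases he : e < a
  · have : G e ≤ G s := hleft.antitoneOn (hse.trans he.le) he.le hse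
    linarith
  by_cases hs : b < s
  · have : G e ≤ G s := hright.antitoneOn hs.le (hs.le.trans hse) hse
    linarith
  push Not at he hs
  have hGe : G e ≤ G b := by
    rcases eq_or_ne e b with rfl | heb
    · exact le_rfl
    · exact (lt_of_strictMonoOn_Icc_of_strictAntiOn_Ici hab.le hmid hright he heb).le
  have hGs : G a ≤ G s := by
    rcases eq_or_ne s a with rfl | hsa
    · exact le_rfl
    · exact (lt_of_strictAntiOn_Iic_of_strictMonoOn_Icc hab.le hleft hmid hs hsa).le
  rcases eq_or_ne s a with rfl | hsa
  · have heb : e ≠ b := fun h => hne (by rw [h])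
    linarith [lt_of_strictMonoOn_Icc_of_strictAntiOn_Ici hab.le hmid hright he heb]
  · linarith [lt_of_strictAntiOn_Iic_of_strictMonoOn_Icc hab.le hleft hmid hs hsa]

end PeakOrder

section Primitive

variable {g : ℝ → ℝ} {S : Set ℝ}

lemma MeasureTheory.LocallyIntegrable.intervalIntegrable (hg : LocallyIntegrable g volume)
    (x y : ℝ) : IntervalIntegrable g volume x y :=
  (hg.integrableOn_isCompact isCompact_uIcc).intervalIntegrable

lemma strictMonoOn_primitive_of_pos (a : ℝ) (hS : S.OrdConnected)
    (hg : LocallyIntegrable g volume) (hpos : ∀ t ∈ interior S, 0 < g t) :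
    StrictMonoOn (fun x => ∫ t in a..x, g t) S := by
  intro x hx y hy hxy
  change (∫ t in a..x, g t) < ∫ t in a..y, g t
  rw [← sub_pos,
    integral_interval_sub_left (hg.intervalIntegrable _ _) (hg.intervalIntegrable _ _)]
  refine intervalIntegral_pos_of_pos_on (hg.intervalIntegrable _ _) (fun t ht => hpos t ?_) hxy
  exact interior_mono (hS.out hx hy) (by rwa [interior_Icc])

lemma strictAntiOn_primitive_of_neg (a : ℝ) (hS : S.OrdConnected)
    (hg : LocallyIntegrable g volume) (hneg : ∀ t ∈ interior S, g t < 0) :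
    StrictAntiOn (fun x => ∫ t in a..x, g t) S := by
  have := (strictMonoOn_primitive_of_pos a hS hg.neg fun t ht => neg_pos.2 (hneg t ht)).neg
  simpa only [Pi.neg_apply, intervalIntegral.integral_neg, neg_neg] using this

theorem integral_lt_integral_of_pos_on_Ioo_of_neg_off_Icc {a b : ℝ} (hab : a < b)
    (hg : LocallyIntegrable g volume) (hpos : ∀ t ∈ Ioo a b, 0 < g t)
    (hneg : ∀ t ∉ Icc a b, g t < 0) {s e : ℝ} (hse : s ≤ e) (hne : (s, e) ≠ (a, b)) :
    ∫ t in s..e, g t < ∫ t in a..b, g t := by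
  have hint := hg.intervalIntegrable
  rw [← integral_interval_sub_left (hint a e) (hint a s),
    ← integral_interval_sub_left (hint a b) (hint a a)]
  refine sub_lt_sub_of_strictAntiOn_of_strictMonoOn_of_strictAntiOn
    (G := fun x => ∫ t in a..x, g t) hab ?_ ?_ ?_ hse hne
  · refine strictAntiOn_primitive_of_neg a ordConnected_Iic hg fun t ht => hneg t ?_
    rw [interior_Iic] at ht
    exact fun h => (not_le.2 ht) h.1
  · exact strictMonoOn_primitive_of_pos a ordConnected_Icc hg (by rwa [interior_Icc])
  · refine strictAntiOn_primitive_of_neg a ordConnected_Ici hg fun t ht => hneg t ?_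
    rw [interior_Ici] at ht
    exact fun h => (not_le.2 ht) h.2

end Primitive

section Gaussian

variable {w lam : ℝ}

lemma sq_mul_sqrt_neg_two_mul_log (hlam0 : 0 < lam) (hlam1 : lam < 1) :
    (w * √(-2 * log lam)) ^ 2 = -2 * log lam * w ^ 2 := by
  rw [mul_pow, sq_sqrt (by linarith [log_neg hlam0 hlam1]), mul_comm]

lemma lt_exp_neg_sq_div_iff (hw : 0 < w) (hlam0 : 0 < lam) (hlam1 : lam < 1) (x : ℝ) :
    lam < exp (-x ^ 2 / (2 * w ^ 2)) ↔ |x| < w * √(-2 * log lam) := by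
  have hd : 0 ≤ w * √(-2 * log lam) := by positivity
  rw [← log_lt_iff_lt_exp hlam0, lt_div_iff₀ (by positivity), ← abs_of_nonneg hd, ← sq_lt_sq,
    sq_mul_sqrt_neg_two_mul_log hlam0 hlam1]
  constructor <;> intro h <;> linarith

lemma exp_neg_sq_div_lt_iff (hw : 0 < w) (hlam0 : 0 < lam) (hlam1 : lam < 1) (x : ℝ) :
    exp (-x ^ 2 / (2 * w ^ 2)) < lam ↔ w * √(-2 * log lam) < |x| := by
  have hd : 0 ≤ w * √(-2 * log lam) := by positivity
  rw [← lt_log_iff_exp_lt hlam0, div_lt_iff₀ (by positivity), ← abs_of_nonneg hd, ← sq_lt_sq,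
    sq_mul_sqrt_neg_two_mul_log hlam0 hlam1]
  constructor <;> intro h <;> linarith

end Gaussian

theorem unique_maximizer (c w lam : ℝ) (hw : 0 < w) (hlam0 : 0 < lam) (hlam1 : lam < 1)
    (f : ℝ → ℝ) (hf : ∀ t, f t = Real.exp (-(t - c)^2 / (2 * w^2)))
    (J : ℝ → ℝ → ℝ)
    (hJ : ∀ s e, J s e = ∫ t in s..e, (f t - lam))
    (d : ℝ) (hd : d = w * Real.sqrt (-2 * Real.log lam)) :
    ∀ s e : ℝ, s ≤ e → (s, e) ≠ (c - d, c + d) → J s e < J (c - d) (c + d) := by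
  intro s e hse hne
  have hd0 : 0 < d := hd ▸ mul_pos hw (sqrt_pos.2 (by linarith [log_neg hlam0 hlam1]))
  have hcont : Continuous fun t => f t - lam := by
    simp only [hf]
    fun_prop
  rw [hJ, hJ]
  refine integral_lt_integral_of_pos_on_Ioo_of_neg_off_Icc (by linarith) hcont.locallyIntegrable
    (fun t ht => ?_) (fun t ht => ?_) hse hne
  · rwa [hf, sub_pos, lt_exp_neg_sq_div_iff hw hlam0 hlam1, ← hd, ← Real.dist_eq,
      ← Metric.mem_ball, Real.ball_eq_Ioo]
  · rwa [hf, sub_neg, exp_neg_sq_div_lt_iff hw hlam0 hlam1, ← hd, ← not_le, ← Real.dist_eq,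
      ← Metric.mem_closedBall, Real.closedBall_eq_Icc]
end

section
/- If g : ℝ → ℝ is continuous and there exist s* < e* with g(t) > 0 for t ∈ (s*, e*) and g(t) < 0 for t ∉ [s*, e*], then the function (s,e) ↦ ∫ₛᵉ g(t) dt over pairs s ≤ e attains its maximum uniquely at (s*, e*). -/
open Set intervalIntegral MeasureTheory

/-!
Write `I(s, e) = ∫ₛᵉ g`. When `[s, e]` meets `[s*, e*]`, interval additivity gives
`I(s, e) - I(s*, e*) = ∫ₛ^{s*} g - ∫ₑ^{e*} g`. Since `g > 0` inside and `g < 0` outside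
`[s*, e*]`, the first oriented integral is `≤ 0` and the second `≥ 0`, each strictly unless its
endpoints agree. When `[s, e]` misses `[s*, e*]`, `g < 0` on `[s, e]`, so `I(s, e) ≤ 0 < I(s*, e*)`.
-/

theorem intervalIntegral_pos_of_ne {f : ℝ → ℝ} {a b : ℝ} (hfi : IntervalIntegrable f volume a b)
    (hab : a ≠ b) (hpos : ∀ x ∈ Ioo a b, 0 < f x) (hneg : ∀ x ∈ Ioo b a, f x < 0) :
    0 < ∫ x in a..b, f x := by
  rcases hab.lt_or_gt with h | h
  · exact intervalIntegral_pos_of_pos_on hfi hpos h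
  · have := intervalIntegral_pos_of_pos_on hfi.symm.neg (fun x hx => neg_pos.2 (hneg x hx)) h
    rwa [Pi.neg_def, intervalIntegral.integral_neg, integral_symm a b, neg_neg] at this

theorem intervalIntegral_lt_of_overlap {g : ℝ → ℝ} (hg : Continuous g) {s' e' s e : ℝ}
    (hpos : ∀ t ∈ Ioo s' e', 0 < g t) (hneg : ∀ t ∉ Icc s' e', g t < 0)
    (hs : s ≤ e') (he : s' ≤ e) (hne : (s, e) ≠ (s', e')) :
    (∫ t in s..e, g t) < ∫ t in s'..e', g t := by
  have hint : ∀ a b, IntervalIntegrable g volume a b := hg.intervalIntegrable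
  have hleft (h : s ≠ s') : 0 < ∫ t in s'..s, g t :=
    intervalIntegral_pos_of_ne (hint _ _) h.symm (fun t ht => hpos t ⟨ht.1, ht.2.trans_le hs⟩)
      (fun t ht => hneg t fun h' => ht.2.not_ge h'.1)
  have hright (h : e ≠ e') : 0 < ∫ t in e..e', g t :=
    intervalIntegral_pos_of_ne (hint _ _) h (fun t ht => hpos t ⟨he.trans_lt ht.1, ht.2⟩)
      (fun t ht => hneg t fun h' => ht.1.not_ge h'.2)
  have hL : 0 ≤ ∫ t in s'..s, g t := by
    obtain rfl | h := eq_or_ne s s'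
    · simp
    · exact (hleft h).le
  have hR : 0 ≤ ∫ t in e..e', g t := by
    obtain rfl | h := eq_or_ne e e'
    · simp
    · exact (hright h).le
  have hdiff := integral_interval_sub_interval_comm (hint s e) (hint s' e') (hint s s')
  rw [integral_symm s' s] at hdiff
  rw [Ne, Prod.mk_inj, not_and_or] at hne
  rcases hne with h | h
  · linarith [hleft h]
  · linarith [hright h]

theorem intervalIntegral_nonpos_of_disjoint {g : ℝ → ℝ} (hg : Continuous g) {s' e' s e : ℝ}
    (hneg : ∀ t ∉ Icc s' e', g t < 0) (hle : s ≤ e) (hdisj : ¬(s ≤ e' ∧ s' ≤ e)) :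
    (∫ t in s..e, g t) ≤ 0 := by
  have hout : ∀ t ∈ Icc s e, g t ≤ 0 := fun t ht =>
    (hneg t fun h' => hdisj ⟨ht.1.trans h'.2, h'.1.trans ht.2⟩).le
  simpa using integral_mono_on hle (hg.intervalIntegrable s e) intervalIntegrable_const hout

theorem abstract_unique_maximizer (g : ℝ → ℝ) (hg : Continuous g)
    (s' e' : ℝ) (hse : s' < e')
    (hpos : ∀ t, t ∈ Set.Ioo s' e' → 0 < g t)
    (hneg : ∀ t, t ∉ Set.Icc s' e' → g t < 0) :
    ∀ s e : ℝ, s ≤ e → (s, e) ≠ (s', e') →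
      (∫ t in s..e, g t) < ∫ t in s'..e', g t := by
  intro s e hle hne
  by_cases hov : s ≤ e' ∧ s' ≤ e
  · exact intervalIntegral_lt_of_overlap hg hpos hneg hov.1 hov.2 hne
  · exact (intervalIntegral_nonpos_of_disjoint hg hneg hle hov).trans_lt
      (intervalIntegral_pos_of_pos_on (hg.intervalIntegrable _ _) hpos hse)
end

section
/- The optimal objective value V(λ) = √(2π)·w·erf(√(-ln λ)) - 2λw√(-2 ln λ) is strictly decreasing in λ on (0,1), with V(λ) → √(2π)·w as λ → 0⁺ and V(λ) → 0 as λ → 1⁻. -/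
open Real Filter Set Topology MeasureTheory

lemma hasDerivAt_erf (z : ℝ) : HasDerivAt erf (2 / √π * exp (-z ^ 2)) z := by
  have hcont : Continuous fun t : ℝ => exp (-t ^ 2) := by fun_prop
  exact (intervalIntegral.integral_hasDerivAt_right (hcont.intervalIntegrable _ _)
    hcont.stronglyMeasurable.stronglyMeasurableAtFilter hcont.continuousAt).const_mul _

lemma continuous_erf : Continuous erf :=
  continuous_iff_continuousAt.2 fun z => (hasDerivAt_erf z).continuousAt

@[simp]
lemma erf_zero : erf 0 = 0 := by
  simp [erf]

lemma tendsto_erf_atTop : Tendsto erf atTop (𝓝 1) := by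
  have hint : IntegrableOn (fun t : ℝ => exp (-t ^ 2)) (Ioi 0) := by
    simpa using (integrable_exp_neg_mul_sq one_pos).integrableOn
  have hhalf : ∫ t in Ioi (0 : ℝ), exp (-t ^ 2) = √π / 2 := by
    simpa using integral_gaussian_Ioi 1
  have h := (intervalIntegral_tendsto_integral_Ioi 0 hint tendsto_id).const_mul (2 / √π)
  rwa [hhalf, div_mul_div_cancel₀ (by positivity), div_self two_ne_zero] at h

noncomputable def normalizedValue (lam : ℝ) : ℝ :=
  √π * erf √(-log lam) - 2 * lam * √(-log lam)

lemma hasDerivAt_normalizedValue {x : ℝ} (hx : x ∈ Ioo 0 1) :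
    HasDerivAt normalizedValue (-2 * √(-log x)) x := by
  obtain ⟨hx0, hx1⟩ := hx
  have hlog : 0 < -log x := neg_pos.2 (log_neg hx0 hx1)
  have hs : HasDerivAt (fun y => √(-log y)) (-x⁻¹ / (2 * √(-log x))) x :=
    (hasDerivAt_log hx0.ne').neg.sqrt hlog.ne'
  have hexp : exp (-√(-log x) ^ 2) = x := by
    rw [sq_sqrt hlog.le, neg_neg, exp_log hx0]
  have herf := ((hasDerivAt_erf _).comp x hs).const_mul √π
  have hlin := ((hasDerivAt_id x).const_mul 2).mul hs
  refine (herf.sub hlin).congr_deriv ?_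
  rw [hexp, id]
  field_simp
  ring

lemma strictAntiOn_normalizedValue : StrictAntiOn normalizedValue (Ioo 0 1) := by
  refine strictAntiOn_of_hasDerivWithinAt_neg (f' := fun x => -2 * √(-log x)) (convex_Ioo 0 1)
    (fun x hx => (hasDerivAt_normalizedValue hx).continuousAt.continuousWithinAt)
    (fun x hx => ?_) (fun x hx => ?_) <;> rw [interior_Ioo] at hx
  · exact (hasDerivAt_normalizedValue hx).hasDerivWithinAt
  · have : 0 < √(-log x) := sqrt_pos.2 (neg_pos.2 (log_neg hx.1 hx.2))
    linarith

lemma tendsto_normalizedValue_nhdsGT_zero : Tendsto normalizedValue (𝓝[>] 0) (𝓝 √π) := by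
  have hs : Tendsto (fun l => √(-log l)) (𝓝[>] 0) atTop :=
    (tendsto_rpow_atTop one_half_pos).congr (fun x => (sqrt_eq_rpow x).symm) |>.comp
      (tendsto_neg_atBot_atTop.comp tendsto_log_nhdsGT_zero)
  have herf : Tendsto (fun l => √π * erf √(-log l)) (𝓝[>] 0) (𝓝 √π) := by
    simpa using (tendsto_erf_atTop.comp hs).const_mul √π
  -- `l √(-log l) = √(-(l log l) l)` for `l ≥ 0`, and the right side is continuous.
  have hprod : Tendsto (fun l => 2 * l * √(-log l)) (𝓝[>] 0) (𝓝 0) := by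
    have hcont : Continuous fun l => 2 * √(-(l * log l) * l) :=
      continuous_const.mul (continuous_mul_log.neg.mul continuous_id).sqrt
    refine (hcont.tendsto' 0 0 (by simp)).mono_left nhdsWithin_le_nhds |>.congr' ?_
    filter_upwards [self_mem_nhdsWithin] with l (hl : 0 < l)
    rw [show -(l * log l) * l = -log l * l ^ 2 by ring, sqrt_mul' _ (sq_nonneg l),
      sqrt_sq hl.le]
    ring
  rw [← sub_zero √π]
  exact herf.sub hprod

lemma tendsto_normalizedValue_nhdsLT_one : Tendsto normalizedValue (𝓝[<] 1) (𝓝 0) := by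
  have hcont : ContinuousAt normalizedValue 1 := by
    have hlog : ContinuousAt log 1 := continuousAt_log one_ne_zero
    unfold normalizedValue
    exact (continuousAt_const.mul (continuous_erf.continuousAt.comp
      (continuous_sqrt.continuousAt.comp hlog.neg))).sub
      ((continuousAt_const.mul continuousAt_id).mul (continuous_sqrt.continuousAt.comp hlog.neg))
  simpa [normalizedValue] using hcont.tendsto.mono_left nhdsWithin_le_nhds

theorem value_strictly_decreasing (w : ℝ) (hw : 0 < w)
    (V : ℝ → ℝ)
    (hV : ∀ lam, V lam = Real.sqrt (2 * Real.pi) * w * erf (Real.sqrt (-Real.log lam)) -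
        2 * lam * w * Real.sqrt (-2 * Real.log lam)) :
    StrictAntiOn V (Set.Ioo 0 1) ∧
    Filter.Tendsto V (nhdsWithin 0 (Set.Ioi 0)) (nhds (Real.sqrt (2 * Real.pi) * w)) ∧
    Filter.Tendsto V (nhdsWithin 1 (Set.Iio 1)) (nhds 0) := by
  have hV' : V = fun lam => √2 * w * normalizedValue lam := by
    funext lam
    rw [hV, normalizedValue, sqrt_mul zero_le_two, show -2 * log lam = 2 * -log lam by ring,
      sqrt_mul zero_le_two]
    ring
  subst hV'
  refine ⟨(strictMono_mul_left_of_pos (by positivity)).comp_strictAntiOn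
      strictAntiOn_normalizedValue, ?_, ?_⟩
  · convert tendsto_normalizedValue_nhdsGT_zero.const_mul (√2 * w) using 2
    rw [sqrt_mul zero_le_two]
    ring
  · simpa using tendsto_normalizedValue_nhdsLT_one.const_mul (√2 * w)
end
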